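/- arXiv:1008.1737 — 4 statements merged into one kernel-verified Lean document; each statement's English description precedes it below -/
import Mathlib

section
/- Let (R, m, k) be a commutative noetherian local ring with Hilbert series 1 + eτ + (e−1)τ² (i.e., dim_k(m/m²) = e, dim_k(m²/m³) = e−1, and m³ = 0) where e ≥ 2. Then for every element x in m \ m², the ideal (x) has length at most e. -/
/-- The (composition) length of an `R`-module, defined as the supremum of
lengths of strictly increasing chains of submodules. -/
noncomputable def moduleLength (R : Type u) [CommRing R] (M : Type v)
    [AddCommGroup M] [Module R M] : WithBot ℕ∞ :=
  Order.krullDim (Submodule R M)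

/-! The length of an ideal is its height in the lattice of ideals. Every ideal strictly inside `(x)`
lies in `m²`, so `height (x) ≤ height m² + 1 = e`. -/

lemma moduleLength_submodule_eq_height {R : Type u} [CommRing R] {M : Type v}
    [AddCommGroup M] [Module R M] (N : Submodule R M) :
    moduleLength R N = Order.height N := by
  rw [moduleLength, ← Module.coe_length, Module.length_submodule]

/-- If `a = c * x` generates a proper subideal of `(x)`, then `c` is not a unit, so `c ∈ m`. -/
lemma IsLocalRing.le_maximalIdeal_sq_of_lt_span_singleton {R : Type u} [CommRing R]
    [IsLocalRing R] {x : R} (hx : x ∈ maximalIdeal R) {I : Ideal R}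
    (hI : I < Ideal.span {x}) : I ≤ maximalIdeal R ^ 2 := by
  intro a haI
  obtain ⟨c, rfl⟩ := Ideal.mem_span_singleton'.mp (hI.le haI)
  have hc : c ∈ maximalIdeal R := by
    refine (mem_maximalIdeal c).mpr fun hunit => hI.not_ge ?_
    rw [Ideal.span_singleton_le_iff_mem]
    simpa [← mul_assoc] using I.mul_mem_left (↑hunit.unit⁻¹) haI
  rw [sq]
  exact Ideal.mul_mem_mul hc hx

theorem stmt4_general (R : Type u) [CommRing R] [IsLocalRing R]
    (e : ℕ) (he : 2 ≤ e)
    (hm2 : moduleLength R (↥((IsLocalRing.maximalIdeal R) ^ 2)) = ((e - 1 : ℕ) : WithBot ℕ∞))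
    (x : R) (hx : x ∈ IsLocalRing.maximalIdeal R) :
    moduleLength R (↥(Ideal.span {x})) ≤ ((e : ℕ) : WithBot ℕ∞) := by
  rw [moduleLength_submodule_eq_height, ← WithBot.coe_natCast, WithBot.coe_inj] at hm2
  rw [moduleLength_submodule_eq_height, ← WithBot.coe_natCast, WithBot.coe_le_coe]
  refine Order.height_le_coe_iff.mpr fun I hI => ?_
  calc Order.height I
      ≤ Order.height (IsLocalRing.maximalIdeal R ^ 2) :=
        Order.height_mono (IsLocalRing.le_maximalIdeal_sq_of_lt_span_singleton hx hI)
    _ < e := by rw [hm2]; exact_mod_cast Nat.sub_lt (by omega) one_pos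

/-- let `(R, m, k)` be a commutative noetherian local ring with
Hilbert series `1 + eτ + (e-1)τ²` (encoded by: `m³ = 0`, `length R = 2e`,
`length m² = e - 1`), `e ≥ 2`.  Then for every `x ∈ m \ m²` the ideal `(x)` has
length at most `e`. -/
theorem stmt4 (R : Type u) [CommRing R] [IsNoetherianRing R] [IsLocalRing R]
    (e : ℕ) (he : 2 ≤ e)
    (h3 : (IsLocalRing.maximalIdeal R) ^ 3 = ⊥)
    (hR : moduleLength R R = ((2 * e : ℕ) : WithBot ℕ∞))
    (hm2 : moduleLength R (↥((IsLocalRing.maximalIdeal R) ^ 2)) = ((e - 1 : ℕ) : WithBot ℕ∞))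
    (x : R) (hx : x ∈ IsLocalRing.maximalIdeal R)
    (hx2 : x ∉ (IsLocalRing.maximalIdeal R) ^ 2) :
    moduleLength R (↥(Ideal.span {x})) ≤ ((e : ℕ) : WithBot ℕ∞) :=
  stmt4_general R e he hm2 x hx
end

section
/- Let (R, m, k) be a commutative noetherian local ring with Hilbert series 1 + eτ + (e−1)τ², e ≥ 2. For every element x in m \ m² there exists an element w in m \ m² annihilating x; moreover, if such a w generates ann(x), then w and x form an exact pair of zero divisors in R. -/
/-- The annihilator of an element of `R` as an ideal. -/
def annIdeal (R : Type u) [CommRing R] (a : R) : Ideal R :=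
  LinearMap.ker (LinearMap.mulLeft R a)

lemma moduleLength_eq_length (R : Type u) [CommRing R] (M : Type v) [AddCommGroup M]
    [Module R M] : moduleLength R M = Module.length R M :=
  (Module.coe_length R M).symm

section Length

variable {R M N : Type*} [Ring R] [AddCommGroup M] [Module R M] [AddCommGroup N] [Module R N]

lemma Submodule.length_mono {P Q : Submodule R M} (h : P ≤ Q) :
    Module.length R P ≤ Module.length R Q :=
  Module.length_le_of_injective _ (Submodule.inclusion_injective h)

lemma Submodule.eq_of_le_of_length_eq [IsArtinian R M] [IsNoetherian R M]
    {P Q : Submodule R M} (hle : P ≤ Q) (h : Module.length R P = Module.length R Q) : P = Q := by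
  rw [Module.length_submodule, Module.length_submodule] at h
  exact hle.eq_of_not_lt fun hlt ↦ (Submodule.height_strictMono hlt).ne h

lemma LinearMap.length_ker_add_length_range (f : M →ₗ[R] N) :
    Module.length R (ker f) + Module.length R (range f) = Module.length R M := by
  have := Module.length_eq_add_of_exact _ _ (Submodule.injective_subtype _)
    f.surjective_rangeRestrict (exact_subtype_ker_map f.rangeRestrict)
  rw [ker_rangeRestrict] at this
  exact this.symm

lemma LinearMap.length_le_length_ker_add_length_map (f : M →ₗ[R] N) (P : Submodule R M) :
    Module.length R P ≤ Module.length R (ker f) + Module.length R (P.map f) := by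
  rw [← (f.domRestrict P).length_ker_add_length_range, range_domRestrict]
  gcongr
  exact Module.length_le_of_injective (P.subtype.restrict fun _ h ↦ h)
    fun _ _ h ↦ Subtype.ext (Subtype.ext (congrArg Subtype.val h :))

end Length

lemma Ideal.length_add_one_of_isMaximal {R : Type*} [CommRing R] (I : Ideal R) [hI : I.IsMaximal] :
    Module.length R I + 1 = Module.length R R := by
  have : IsSimpleModule R (R ⧸ I) := isSimpleModule_iff_isCoatom.mpr (Ideal.isMaximal_def.mp hI)
  rw [Module.length_eq_add_of_exact I.subtype I.mkQ I.injective_subtype I.mkQ_surjective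
    (LinearMap.exact_subtype_mkQ I), Module.length_eq_one R (R ⧸ I)]

section annIdeal

variable {R : Type*} [CommRing R]

lemma mem_annIdeal {a b : R} : b ∈ annIdeal R a ↔ a * b = 0 := Iff.rfl

lemma range_mulLeft (a : R) : LinearMap.range (LinearMap.mulLeft R a) = Ideal.span {a} := by
  ext y
  simp [Ideal.mem_span_singleton', mul_comm]

lemma length_annIdeal_add_length_span (a : R) :
    Module.length R (annIdeal R a) + Module.length R (Ideal.span {a}) = Module.length R R := by
  rw [← range_mulLeft]
  exact LinearMap.length_ker_add_length_range _

lemma annIdeal_eq_span_of_annIdeal_eq_span [IsArtinianRing R] {x w : R}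
    (h : annIdeal R x = Ideal.span {w}) : annIdeal R w = Ideal.span {x} := by
  have hwx : x * w = 0 := mem_annIdeal.mp (h ▸ Ideal.mem_span_singleton_self w)
  refine (Submodule.eq_of_le_of_length_eq ?_ ?_).symm
  · rw [Ideal.span_le, Set.singleton_subset_iff, SetLike.mem_coe, mem_annIdeal, mul_comm, hwx]
  · have hx := length_annIdeal_add_length_span x
    rw [← length_annIdeal_add_length_span w, h, add_comm] at hx
    exact (WithTop.add_right_inj Module.length_ne_top).mp hx

variable [IsLocalRing R]

lemma IsLocalRing.mem_maximalIdeal_of_mul_eq_zero {w x : R} (hx : x ≠ 0) (h : w * x = 0) :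
    w ∈ maximalIdeal R := by
  by_contra hw
  exact hx ((notMem_maximalIdeal.mp hw).mul_right_eq_zero.mp h)

lemma IsLocalRing.length_le_length_annIdeal_add {x : R} (hx : x ∈ maximalIdeal R) :
    Module.length R R ≤
      Module.length R (annIdeal R x) + Module.length R ↥(maximalIdeal R ^ 2) + 1 := by
  have hmap : Submodule.map (LinearMap.mulLeft R x) (maximalIdeal R) ≤ maximalIdeal R ^ 2 := by
    rintro _ ⟨r, hr, rfl⟩
    rw [sq]
    exact Ideal.mul_mem_mul hx hr
  calc Module.length R R = Module.length R (maximalIdeal R) + 1 :=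
        (maximalIdeal R).length_add_one_of_isMaximal.symm
    _ ≤ _ := by
      gcongr
      exact ((LinearMap.mulLeft R x).length_le_length_ker_add_length_map _).trans
        (add_le_add_right (Submodule.length_mono hmap) _)

end annIdeal

theorem stmt5_general (R : Type u) [CommRing R] [IsLocalRing R]
    (e : ℕ) (he : 2 ≤ e)
    (hR : moduleLength R R = ((2 * e : ℕ) : WithBot ℕ∞))
    (hm2 : moduleLength R (↥((IsLocalRing.maximalIdeal R) ^ 2)) = ((e - 1 : ℕ) : WithBot ℕ∞))
    (x : R) (hx : x ∈ IsLocalRing.maximalIdeal R)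
    (hx2 : x ∉ (IsLocalRing.maximalIdeal R) ^ 2) :
    (∃ w, w ∈ IsLocalRing.maximalIdeal R ∧ w ∉ (IsLocalRing.maximalIdeal R) ^ 2 ∧
        w * x = 0) ∧
    (∀ w, w ∈ IsLocalRing.maximalIdeal R → w ∉ (IsLocalRing.maximalIdeal R) ^ 2 →
      annIdeal R x = Ideal.span {w} → annIdeal R w = Ideal.span {x}) := by
  set m := IsLocalRing.maximalIdeal R
  rw [moduleLength_eq_length, ← WithBot.coe_natCast, WithBot.coe_inj] at hR hm2
  have : IsArtinianRing R := (isFiniteLength_iff_isNoetherian_isArtinian.mp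
    (Module.length_ne_top_iff.mp (hR ▸ ENat.natCast_ne_top _))).2
  refine ⟨?_, fun w _ _ ↦ annIdeal_eq_span_of_annIdeal_eq_span⟩
  obtain ⟨a, ha⟩ := ENat.ne_top_iff_exists.mp (Module.length_ne_top (R := R) (M := annIdeal R x))
  have hbound := IsLocalRing.length_le_length_annIdeal_add hx
  rw [hR, ← ha, hm2] at hbound
  norm_cast at hbound
  have hnot_le : ¬ annIdeal R x ≤ m ^ 2 := fun hle ↦ by
    have := Submodule.length_mono hle
    rw [← ha, hm2] at this
    norm_cast at this
    omega
  obtain ⟨w, hwA, hw2⟩ := SetLike.not_le_iff_exists.mp hnot_le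
  have hwx : w * x = 0 := by rw [mul_comm]; exact mem_annIdeal.mp hwA
  have hx0 : x ≠ 0 := fun h ↦ hx2 (h ▸ zero_mem _)
  exact ⟨w, IsLocalRing.mem_maximalIdeal_of_mul_eq_zero hx0 hwx, hw2, hwx⟩

/-- let `(R, m, k)` be a commutative noetherian local ring with
Hilbert series `1 + eτ + (e-1)τ²` (encoded by: `m³ = 0`, `length R = 2e`,
`length m² = e - 1`), `e ≥ 2`.  For every `x ∈ m \ m²` there is `w ∈ m \ m²`
with `wx = 0`; moreover any `w` generating `ann(x)` forms with `x` an exact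
pair of zero divisors. -/
theorem stmt5 (R : Type u) [CommRing R] [IsNoetherianRing R] [IsLocalRing R]
    (e : ℕ) (he : 2 ≤ e)
    (h3 : (IsLocalRing.maximalIdeal R) ^ 3 = ⊥)
    (hR : moduleLength R R = ((2 * e : ℕ) : WithBot ℕ∞))
    (hm2 : moduleLength R (↥((IsLocalRing.maximalIdeal R) ^ 2)) = ((e - 1 : ℕ) : WithBot ℕ∞))
    (x : R) (hx : x ∈ IsLocalRing.maximalIdeal R)
    (hx2 : x ∉ (IsLocalRing.maximalIdeal R) ^ 2) :
    (∃ w, w ∈ IsLocalRing.maximalIdeal R ∧ w ∉ (IsLocalRing.maximalIdeal R) ^ 2 ∧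
        w * x = 0) ∧
    (∀ w, w ∈ IsLocalRing.maximalIdeal R → w ∉ (IsLocalRing.maximalIdeal R) ^ 2 →
      annIdeal R x = Ideal.span {w} → annIdeal R w = Ideal.span {x}) :=
  stmt5_general R e he hR hm2 x hx hx2
end

section
/- Let (R, m) be a commutative noetherian local ring with m³ = 0 and embedding dimension at least 3, and suppose w and x form an exact pair of zero divisors in R. Then for every element y in m \ (w, x) there exists an element z in m \ m² with yz = 0 and z ∉ (x) + m². -/
open IsLocalRing Module

theorem mem_annIdeal_iff {R : Type*} [CommRing R] {a z : R} : z ∈ annIdeal R a ↔ a * z = 0 :=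
  Iff.rfl

namespace IsLocalRing

variable {R : Type*} [CommRing R] [IsLocalRing R]

theorem mul_eq_zero_of_mem_of_mem_sq (h3 : maximalIdeal R ^ 3 = ⊥) {a b : R}
    (ha : a ∈ maximalIdeal R) (hb : b ∈ maximalIdeal R ^ 2) : a * b = 0 := by
  have hab : a * b ∈ maximalIdeal R ^ 3 := by
    rw [pow_succ']
    exact Ideal.mul_mem_mul ha hb
  rwa [h3, Ideal.mem_bot] at hab

theorem isTorsionBySet_sq_maximalIdeal (h3 : maximalIdeal R ^ 3 = ⊥) :
    IsTorsionBySet R ↥(maximalIdeal R ^ 2) (maximalIdeal R) :=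
  fun u a => Subtype.ext (mul_eq_zero_of_mem_of_mem_sq h3 a.2 u.2)

theorem notMem_sq_of_annIdeal_eq_span [IsNoetherianRing R] (h3 : maximalIdeal R ^ 3 = ⊥)
    (hdim : 1 < finrank (ResidueField R) (CotangentSpace R)) {a b : R}
    (hb : b ∈ maximalIdeal R) (hab : annIdeal R a = Ideal.span {b}) :
    a ∉ maximalIdeal R ^ 2 := by
  intro ha
  refine hdim.not_ge
    (finrank_cotangentSpace_le_one_iff.mpr ⟨b, le_antisymm (fun c hc => ?_) ?_⟩)
  · change c ∈ Ideal.span {b}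
    rw [← hab, mem_annIdeal_iff, mul_comm]
    exact mul_eq_zero_of_mem_of_mem_sq h3 hc ha
  · rwa [Ideal.submodule_span_eq, Ideal.span_le, Set.singleton_subset_iff]

theorem exists_mem_maximalIdeal_mul_eq_of_mem_sq (h3 : maximalIdeal R ^ 3 = ⊥) {w x u : R}
    (hw : w ∈ maximalIdeal R) (hwx : annIdeal R w = Ideal.span {x})
    (hx : x ∉ maximalIdeal R ^ 2) (hu : u ∈ maximalIdeal R ^ 2) :
    ∃ c ∈ maximalIdeal R, c * x = u := by
  have hu' : u ∈ Ideal.span {x} := by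
    rw [← hwx, mem_annIdeal_iff]
    exact mul_eq_zero_of_mem_of_mem_sq h3 hw hu
  obtain ⟨c, rfl⟩ := Ideal.mem_span_singleton'.mp hu'
  refine ⟨c, ?_, rfl⟩
  by_contra hc
  obtain ⟨e, rfl⟩ := notMem_maximalIdeal.mp hc
  apply hx
  simpa using Ideal.mul_mem_left _ (↑e⁻¹ : R) hu

theorem mul_eq_zero_of_mem_span_sup_sq (h3 : maximalIdeal R ^ 3 = ⊥) {x y z : R}
    (hx : x ∈ maximalIdeal R) (hy : y ∈ maximalIdeal R)
    (hz : z ∈ Ideal.span {x} + maximalIdeal R ^ 2) (hz2 : z ∉ maximalIdeal R ^ 2)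
    (hyz : y * z = 0) : y * x = 0 := by
  obtain ⟨p, hp, q, hq, rfl⟩ := Submodule.mem_sup.mp hz
  obtain ⟨a, rfl⟩ := Ideal.mem_span_singleton'.mp hp
  have ha : a ∉ maximalIdeal R := fun ha =>
    hz2 (Ideal.add_mem _ (by rw [pow_two]; exact Ideal.mul_mem_mul ha hx) hq)
  have hayx : a * (y * x) = 0 :=
    calc a * (y * x) = y * (a * x + q) - y * q := by ring
      _ = 0 := by rw [hyz, mul_eq_zero_of_mem_of_mem_sq h3 hy hq, sub_zero]
  exact (notMem_maximalIdeal.mp ha).mul_right_eq_zero.mp hayx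

section CotangentMul

-- Such a structure exists once `m³ = 0`, by `isTorsionBySet_sq_maximalIdeal`.
variable [Module (ResidueField R) ↥(maximalIdeal R ^ 2)]
  [IsScalarTower R (ResidueField R) ↥(maximalIdeal R ^ 2)]

noncomputable def cotangentMul (a : R) (ha : a ∈ maximalIdeal R) :
    CotangentSpace R →ₗ[ResidueField R] ↥(maximalIdeal R ^ 2) :=
  let f : CotangentSpace R →ₗ[R] ↥(maximalIdeal R ^ 2) := Submodule.liftQ _
    ((LinearMap.mulLeft R a).restrict fun z hz => by
      rw [pow_two]
      exact Ideal.mul_mem_mul ha hz)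
    (Submodule.smul_le.mpr fun r hr z _ => by
      rw [LinearMap.mem_ker, map_smul, ← algebraMap_smul (ResidueField R),
        ResidueField.algebraMap_eq, (residue_eq_zero_iff r).mpr hr, zero_smul])
  f.extendScalarsOfSurjective Ideal.Quotient.mk_surjective

theorem coe_cotangentMul_toCotangent (a : R) (ha : a ∈ maximalIdeal R) (z : maximalIdeal R) :
    (cotangentMul a ha ((maximalIdeal R).toCotangent z) : R) = a * z :=
  rfl

theorem finrank_sq_add_one_eq_finrank_cotangentSpace [IsNoetherianRing R]
    (h3 : maximalIdeal R ^ 3 = ⊥) {w x : R}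
    (hw : w ∈ maximalIdeal R) (hx : x ∈ maximalIdeal R)
    (hw2 : w ∉ maximalIdeal R ^ 2) (hx2 : x ∉ maximalIdeal R ^ 2)
    (hxw : annIdeal R x = Ideal.span {w}) (hwx : annIdeal R w = Ideal.span {x}) :
    finrank (ResidueField R) ↥(maximalIdeal R ^ 2) + 1 =
      finrank (ResidueField R) (CotangentSpace R) := by
  set μ := cotangentMul x hx
  have hsurj : Function.Surjective μ := by
    rintro ⟨u, hu⟩
    obtain ⟨c, hc, rfl⟩ := exists_mem_maximalIdeal_mul_eq_of_mem_sq h3 hw hwx hx2 hu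
    exact ⟨(maximalIdeal R).toCotangent ⟨c, hc⟩,
      Subtype.ext ((coe_cotangentMul_toCotangent x hx _).trans (mul_comm x c))⟩
  have hker : LinearMap.ker μ = (ResidueField R) ∙ (maximalIdeal R).toCotangent ⟨w, hw⟩ := by
    apply le_antisymm
    · intro v hv
      obtain ⟨z, rfl⟩ := (maximalIdeal R).toCotangent_surjective v
      have hxz : (z : R) ∈ annIdeal R x :=
        (coe_cotangentMul_toCotangent x hx z).symm.trans (congrArg Subtype.val hv)
      rw [hxw] at hxz
      obtain ⟨c, hc⟩ := Ideal.mem_span_singleton'.mp hxz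
      have hz : z = c • ⟨w, hw⟩ := Subtype.ext hc.symm
      rw [hz, map_smul, ← algebraMap_smul (ResidueField R)]
      exact Submodule.smul_mem _ _ (Submodule.mem_span_singleton_self _)
    · rw [Submodule.span_le, Set.singleton_subset_iff, SetLike.mem_coe, LinearMap.mem_ker]
      refine Subtype.ext ((coe_cotangentMul_toCotangent x hx _).trans (mem_annIdeal_iff.mp ?_))
      rw [hxw]
      exact Ideal.mem_span_singleton_self w
  have hw0 : (maximalIdeal R).toCotangent ⟨w, hw⟩ ≠ 0 :=
    fun h => hw2 (((maximalIdeal R).toCotangent_eq_zero _).mp h)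
  rw [← μ.finrank_range_add_finrank_ker, LinearMap.range_eq_top.mpr hsurj, finrank_top, hker,
    finrank_span_singleton hw0]

theorem exists_mul_eq_zero_notMem_sq [IsNoetherianRing R] {y : R} (hy : y ∈ maximalIdeal R)
    (hlt : finrank (ResidueField R) ↥(maximalIdeal R ^ 2) <
      finrank (ResidueField R) (CotangentSpace R)) :
    ∃ z ∈ maximalIdeal R, z ∉ maximalIdeal R ^ 2 ∧ y * z = 0 := by
  have _ : Module.Finite (ResidueField R) ↥(maximalIdeal R ^ 2) :=
    .of_restrictScalars_finite R _ _
  obtain ⟨v, hv, hv0⟩ :=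
    Submodule.exists_mem_ne_zero_of_ne_bot (LinearMap.ker_ne_bot_of_finrank_lt
      (f := cotangentMul y hy) hlt)
  obtain ⟨z, rfl⟩ := (maximalIdeal R).toCotangent_surjective v
  exact ⟨z, z.2, fun hz => hv0 (((maximalIdeal R).toCotangent_eq_zero z).mpr hz),
    (coe_cotangentMul_toCotangent y hy z).symm.trans (congrArg Subtype.val hv)⟩

end CotangentMul

end IsLocalRing

theorem stmt11_general (R : Type u) [CommRing R] [IsNoetherianRing R] [IsLocalRing R]
    (h3 : (IsLocalRing.maximalIdeal R) ^ 3 = ⊥)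
    (hdim : 3 ≤ Module.finrank (IsLocalRing.ResidueField R) (IsLocalRing.CotangentSpace R))
    (w x : R) (hxu : ¬ IsUnit x) (hwu : ¬ IsUnit w)
    (h1 : annIdeal R x = Ideal.span {w}) (h2 : annIdeal R w = Ideal.span {x})
    (y : R) (hy : y ∈ IsLocalRing.maximalIdeal R) (hy' : y ∉ Ideal.span {w, x}) :
    ∃ z, z ∈ IsLocalRing.maximalIdeal R ∧ z ∉ (IsLocalRing.maximalIdeal R) ^ 2 ∧
      y * z = 0 ∧ z ∉ Ideal.span {x} + (IsLocalRing.maximalIdeal R) ^ 2 := by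
  have hxm : x ∈ maximalIdeal R := (mem_maximalIdeal x).mpr hxu
  have hwm : w ∈ maximalIdeal R := (mem_maximalIdeal w).mpr hwu
  have hx2 := notMem_sq_of_annIdeal_eq_span h3 (by omega) hwm h1
  have hw2 := notMem_sq_of_annIdeal_eq_span h3 (by omega) hxm h2
  let _ : Module (ResidueField R) ↥(maximalIdeal R ^ 2) :=
    (isTorsionBySet_sq_maximalIdeal h3).module
  have _ : IsScalarTower R (ResidueField R) ↥(maximalIdeal R ^ 2) :=
    (isTorsionBySet_sq_maximalIdeal h3).isScalarTower
  have hrank := finrank_sq_add_one_eq_finrank_cotangentSpace h3 hwm hxm hw2 hx2 h1 h2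
  obtain ⟨z, hzm, hz2, hyz⟩ := exists_mul_eq_zero_notMem_sq hy (by omega)
  refine ⟨z, hzm, hz2, hyz, fun hz => hy' ?_⟩
  have hyw : y ∈ Ideal.span {w} := by
    rw [← h1, mem_annIdeal_iff, mul_comm]
    exact mul_eq_zero_of_mem_span_sup_sq h3 hxm hy hz hz2 hyz
  exact Ideal.span_mono (by simp) hyw

/-- let `(R, m)` be a commutative noetherian local ring with
`m³ = 0` and embedding dimension at least `3`, and suppose `w, x` form an
exact pair of zero divisors.  Then for every `y ∈ m \ (w, x)` there exists
`z ∈ m \ m²` with `yz = 0` and `z ∉ (x) + m²`. -/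
theorem stmt11 (R : Type u) [CommRing R] [IsNoetherianRing R] [IsLocalRing R]
    (h3 : (IsLocalRing.maximalIdeal R) ^ 3 = ⊥)
    (hdim : 3 ≤ Module.finrank (IsLocalRing.ResidueField R) (IsLocalRing.CotangentSpace R))
    (w x : R) (hx0 : x ≠ 0) (hxu : ¬ IsUnit x) (hw0 : w ≠ 0) (hwu : ¬ IsUnit w)
    (h1 : annIdeal R x = Ideal.span {w}) (h2 : annIdeal R w = Ideal.span {x})
    (y : R) (hy : y ∈ IsLocalRing.maximalIdeal R) (hy' : y ∉ Ideal.span {w, x}) :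
    ∃ z, z ∈ IsLocalRing.maximalIdeal R ∧ z ∉ (IsLocalRing.maximalIdeal R) ^ 2 ∧
      y * z = 0 ∧ z ∉ Ideal.span {x} + (IsLocalRing.maximalIdeal R) ^ 2 :=
  stmt11_general R h3 hdim w x hxu hwu h1 h2 y hy hy'
end

section
/- Let k be a field and e ≥ 2 an integer. In the ring R = k[x_1, …, x_e]/((x_1²) + (x_i x_j : 2 ≤ i ≤ j ≤ e)), the annihilator of x_1 equals the ideal (x_1); in particular x_1 is an exact zero divisor in R. Moreover R has Hilbert series 1 + eτ + (e−1)τ². -/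
open MvPolynomial

/-- The defining ideal `(x₁²) + (xᵢxⱼ : 2 ≤ i ≤ j ≤ e)` of Example `conca`. -/
noncomputable def I13 (k : Type u) [Field k] (e : ℕ) (he : 2 ≤ e) :
    Ideal (MvPolynomial (Fin e) k) :=
  Ideal.span ({X ⟨0, by omega⟩ ^ 2} ∪
    {p | ∃ i j : Fin e, i ≠ ⟨0, by omega⟩ ∧ j ≠ ⟨0, by omega⟩ ∧ p = X i * X j})

/-!
The quotient `R = k[x_i : i ∈ σ] / ((x_{i₀}²) + (x_i x_j : i, j ≠ i₀))` is isomorphic to the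
dual numbers `B[ε]` over the trivial square-zero extension `B = k ⊕ V`, `V = k^(σ ∖ {i₀})`:
`x_{i₀} ↦ ε` and `x_j ↦` the `j`-th basis vector of `V`. Both directions are given by universal
properties, so the isomorphism needs no normal form for polynomials.

In `B[ε]` everything is explicit: `ε (b + b' ε) = b ε`, so the annihilator of `ε` is `(ε)`; the
ideal `m` of the variables consists of elements whose constant term vanishes, `m² = V ε` and
`m · m² = 0`. Finally `R` is local with residue field `k`, so the length of an `R`-module that is
finite-dimensional over `k` is its `k`-dimension: `2 |σ|` for `R` and `|σ| - 1` for `m²`.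
-/

open TrivSqZeroExt DualNumber IsLocalRing

instance TrivSqZeroExt.isLocalRing {R M : Type*} [CommRing R] [IsLocalRing R] [AddCommGroup M]
    [Module R M] [Module Rᵐᵒᵖ M] [IsCentralScalar R M] : IsLocalRing (TrivSqZeroExt R M) :=
  .of_isUnit_or_isUnit_one_sub_self fun x => by
    simpa [isUnit_iff_isUnit_fst] using isUnit_or_isUnit_one_sub_self x.fst

lemma DualNumber.eps_mul_eq_zero_iff {R : Type*} [CommSemiring R] {x : R[ε]} :
    ε * x = 0 ↔ ε ∣ x := by
  rw [← fst_eq_zero_iff_eps_dvd, TrivSqZeroExt.ext_iff]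
  simp

lemma DualNumber.eps_ne_zero {R : Type*} [Semiring R] [Nontrivial R] : (ε : R[ε]) ≠ 0 := by
  simp [TrivSqZeroExt.ext_iff]

lemma DualNumber.not_isUnit_eps {R : Type*} [CommRing R] [Nontrivial R] : ¬ IsUnit (ε : R[ε]) := by
  simp [isUnit_iff_isUnit_fst]

lemma DualNumber.algHom_ext_of_eps {R A B : Type*} [CommSemiring R] [CommSemiring A] [Semiring B]
    [Algebra R A] [Algebra R B] ⦃f g : A[ε] →ₐ[R] B⦄
    (hinl : f.comp (inlAlgHom R A A) = g.comp (inlAlgHom R A A)) (heps : f ε = g ε) : f = g := by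
  refine algHom_ext' hinl (LinearMap.ext fun a => ?_)
  have hfg := AlgHom.congr_fun hinl a
  simp only [AlgHom.comp_apply, inlAlgHom_apply] at hfg
  simp [← inl_mul_eq_smul, hfg, heps]

theorem Module.length_eq_finrank_of_residue_surjective {k R M : Type*} [Field k] [CommRing R]
    [IsLocalRing R] [Algebra k R] [AddCommGroup M] [Module k M] [Module R M]
    [IsScalarTower k R M] [Module.Finite k M]
    (h : Function.Surjective (algebraMap k (ResidueField R))) :
    Module.length R M = Module.finrank k M := by
  have hκ : Module.length (ResidueField k) (ResidueField R) = 1 := by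
    rw [Module.length_eq_of_surjective (R := ResidueField R), Module.length_eq_one]
    intro x
    obtain ⟨c, rfl⟩ := h x
    exact ⟨residue k c, by rw [IsScalarTower.algebraMap_apply k (ResidueField k)]; rfl⟩
  rw [← Module.length_eq_finrank, IsLocalRing.length_restrictScalars k R M, hκ, mul_one]

namespace MvPolynomial

section CommRing

variable (k : Type*) [CommRing k] {σ : Type*} (i₀ : σ)

noncomputable def concaIdeal : Ideal (MvPolynomial σ k) :=
  Ideal.span ({X i₀ ^ 2} ∪ {p | ∃ i j : σ, i ≠ i₀ ∧ j ≠ i₀ ∧ p = X i * X j})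

abbrev ConcaRing := MvPolynomial σ k ⧸ concaIdeal k i₀

noncomputable def concaVarIdeal : Ideal (ConcaRing k i₀) :=
  Ideal.span (Set.range fun i => Ideal.Quotient.mk (concaIdeal k i₀) (X i))

abbrev ConcaModel := DualNumber (TrivSqZeroExt k ({j // j ≠ i₀} →₀ k))

variable {k i₀}

lemma mk_X_self_sq : Ideal.Quotient.mk (concaIdeal k i₀) (X i₀) ^ 2 = 0 :=
  Ideal.Quotient.eq_zero_iff_mem.mpr (Ideal.subset_span (.inl rfl))

lemma mk_X_mul_mk_X {i j : σ} (hi : i ≠ i₀) (hj : j ≠ i₀) :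
    Ideal.Quotient.mk (concaIdeal k i₀) (X i) * Ideal.Quotient.mk _ (X j) = 0 :=
  Ideal.Quotient.eq_zero_iff_mem.mpr (Ideal.subset_span (.inr ⟨i, j, hi, hj, rfl⟩))

section DecidableEq

variable [DecidableEq σ]

variable (k i₀) in
noncomputable def concaGen (i : σ) : ConcaModel k i₀ :=
  if h : i = i₀ then ε else inl (inr (Finsupp.single ⟨i, h⟩ 1))

lemma concaGen_self : concaGen k i₀ i₀ = ε := dif_pos rfl

lemma concaGen_of_ne {i : σ} (h : i ≠ i₀) :
    concaGen k i₀ i = inl (inr (Finsupp.single ⟨i, h⟩ 1)) := dif_neg h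

variable (k i₀)

noncomputable def toConcaModel : ConcaRing k i₀ →ₐ[k] ConcaModel k i₀ :=
  Ideal.Quotient.liftₐ _ (aeval (concaGen k i₀)) fun p hp => by
    refine (Ideal.span_le (I := RingHom.ker (aeval (concaGen k i₀)))).mpr ?_ hp
    rintro _ (h | ⟨i, j, hi, hj, rfl⟩)
    · rw [Set.mem_singleton_iff.mp h]
      simp [concaGen_self, sq]
    · simp [concaGen_of_ne hi, concaGen_of_ne hj, ← inl_mul]

noncomputable def ofConcaModel : ConcaModel k i₀ →ₐ[k] ConcaRing k i₀ :=
  DualNumber.lift ⟨(liftEquivOfComm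
    ⟨Finsupp.linearCombination k (fun j => Ideal.Quotient.mk _ (X j.1)), fun v w => by
      have h (i j : {j // j ≠ i₀}) := mk_X_mul_mk_X (k := k) i.2 j.2
      simp [Finsupp.linearCombination_apply, Finsupp.sum_mul, Finsupp.mul_sum, h]⟩,
    Ideal.Quotient.mk _ (X i₀)), by simpa [sq] using mk_X_self_sq, fun _ => Commute.all _ _⟩

variable {k i₀}

@[simp] lemma toConcaModel_mk (p : MvPolynomial σ k) :
    toConcaModel k i₀ (Ideal.Quotient.mk _ p) = aeval (concaGen k i₀) p := rfl

@[simp] lemma ofConcaModel_concaGen (i : σ) :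
    ofConcaModel k i₀ (concaGen k i₀ i) = Ideal.Quotient.mk _ (X i) := by
  by_cases h : i = i₀
  · subst h
    simp [ofConcaModel, concaGen_self]
  · simp [ofConcaModel, concaGen_of_ne h]

lemma toConcaModel_comp_ofConcaModel :
    (toConcaModel k i₀).comp (ofConcaModel k i₀) = AlgHom.id k _ := by
  refine DualNumber.algHom_ext_of_eps (TrivSqZeroExt.algHom_ext fun v => ?_) ?_
  · induction v using Finsupp.induction_linear with
    | zero => simp
    | add v w hv hw => simp_all [inr_add]
    | single j c => simp [ofConcaModel, concaGen_of_ne j.2, ← inl_smul, ← inr_smul]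
  · simpa [ofConcaModel] using concaGen_self

lemma ofConcaModel_comp_toConcaModel :
    (ofConcaModel k i₀).comp (toConcaModel k i₀) = AlgHom.id k _ :=
  Ideal.Quotient.algHom_ext _ (MvPolynomial.algHom_ext fun i => by simp)

variable (k i₀) in
noncomputable def concaEquiv : ConcaRing k i₀ ≃ₐ[k] ConcaModel k i₀ :=
  .ofAlgHom _ _ toConcaModel_comp_ofConcaModel ofConcaModel_comp_toConcaModel

@[simp] lemma concaEquiv_mk_X (i : σ) :
    concaEquiv k i₀ (Ideal.Quotient.mk _ (X i)) = concaGen k i₀ i := by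
  simp [concaEquiv]

lemma fst_fst_concaEquiv_of_mem_concaVarIdeal {x : ConcaRing k i₀}
    (hx : x ∈ concaVarIdeal k i₀) : (concaEquiv k i₀ x).fst.fst = 0 := by
  induction hx using Submodule.span_induction with
  | mem _ h =>
    obtain ⟨i, rfl⟩ := h
    by_cases h : i = i₀
    · simp [h, concaGen_self]
    · simp [concaGen_of_ne h]
  | zero => simp
  | add _ _ _ _ ha hb => simp [ha, hb]
  | smul r _ _ h => simp [h]

lemma concaEquiv_symm_inr_inr_mem_concaVarIdeal_sq (v : {j // j ≠ i₀} →₀ k) :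
    (concaEquiv k i₀).symm (inr (inr v)) ∈ concaVarIdeal k i₀ ^ 2 := by
  induction v using Finsupp.induction_linear with
  | zero => simp
  | add v w hv hw => rw [inr_add, inr_add, map_add]; exact add_mem hv hw
  | single j c =>
    have hj : (concaEquiv k i₀).symm (inr (inr (Finsupp.single j c))) = algebraMap k _ c *
        (Ideal.Quotient.mk (concaIdeal k i₀) (X i₀) * Ideal.Quotient.mk _ (X j.1)) := by
      rw [AlgEquiv.symm_apply_eq]
      ext <;> simp [concaGen_self, concaGen_of_ne j.2, algebraMap_eq_inl']
    rw [hj, sq]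
    exact Ideal.mul_mem_left _ _
      (Ideal.mul_mem_mul (Ideal.subset_span ⟨_, rfl⟩) (Ideal.subset_span ⟨_, rfl⟩))

lemma mem_concaVarIdeal_sq_iff {x : ConcaRing k i₀} :
    x ∈ concaVarIdeal k i₀ ^ 2 ↔
      (concaEquiv k i₀ x).fst = 0 ∧ (concaEquiv k i₀ x).snd.fst = 0 := by
  constructor
  · intro hx
    rw [sq] at hx
    refine Submodule.mul_induction_on hx (fun a ha b hb => ?_) fun a b ha hb => ?_
    · have := fst_fst_concaEquiv_of_mem_concaVarIdeal ha
      have := fst_fst_concaEquiv_of_mem_concaVarIdeal hb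
      constructor <;> simp_all [TrivSqZeroExt.ext_iff]
    · simp [ha, hb]
  · rintro ⟨h₁, h₂⟩
    have hx : x = (concaEquiv k i₀).symm (inr (inr (concaEquiv k i₀ x).snd.snd)) := by
      rw [AlgEquiv.eq_symm_apply]
      ext <;> simp [h₁, h₂]
    rw [hx]
    exact concaEquiv_symm_inr_inr_mem_concaVarIdeal_sq _

variable (k i₀) in
noncomputable def concaVarIdealSqEquiv :
    ↥(concaVarIdeal k i₀ ^ 2) ≃ₗ[k] ({j // j ≠ i₀} →₀ k) :=
  LinearEquiv.ofBijective
    ({ toFun x := (concaEquiv k i₀ x).snd.snd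
       map_add' x y := by simp
       map_smul' c x := by simp } : ↥(concaVarIdeal k i₀ ^ 2) →ₗ[k] _)
    ⟨fun x y hxy => by
      have hx := mem_concaVarIdeal_sq_iff.mp x.2
      have hy := mem_concaVarIdeal_sq_iff.mp y.2
      refine Subtype.ext ((concaEquiv k i₀).injective ?_)
      ext <;> simp_all,
    fun v => ⟨⟨_, concaEquiv_symm_inr_inr_mem_concaVarIdeal_sq v⟩, by simp⟩⟩

end DecidableEq

lemma concaVarIdeal_pow_three : concaVarIdeal k i₀ ^ 3 = ⊥ := by
  classical
  refine (Submodule.eq_bot_iff _).mpr fun x hx => ?_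
  rw [pow_succ'] at hx
  refine Submodule.mul_induction_on hx (fun a ha b hb => ?_) fun a b ha hb => by simp [ha, hb]
  have := fst_fst_concaEquiv_of_mem_concaVarIdeal ha
  have := mem_concaVarIdeal_sq_iff.mp hb
  refine (concaEquiv k i₀).injective ?_
  ext <;> simp_all

lemma annIdeal_mk_X_self :
    annIdeal (ConcaRing k i₀) (Ideal.Quotient.mk _ (X i₀)) =
      Ideal.span {Ideal.Quotient.mk _ (X i₀)} := by
  classical
  ext x
  rw [annIdeal, LinearMap.mem_ker, LinearMap.mulLeft_apply, Ideal.mem_span_singleton,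
    ← map_dvd_iff (concaEquiv k i₀), ← map_eq_zero_iff _ (concaEquiv k i₀).injective, map_mul,
    concaEquiv_mk_X, concaGen_self, eps_mul_eq_zero_iff]

lemma mk_X_self_ne_zero [Nontrivial k] : Ideal.Quotient.mk (concaIdeal k i₀) (X i₀) ≠ 0 := by
  classical
  rw [← map_ne_zero_iff _ (concaEquiv k i₀).injective, concaEquiv_mk_X, concaGen_self]
  exact eps_ne_zero

lemma not_isUnit_mk_X_self [Nontrivial k] :
    ¬ IsUnit (Ideal.Quotient.mk (concaIdeal k i₀) (X i₀)) := by
  classical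
  rw [← isUnit_map_iff (concaEquiv k i₀), concaEquiv_mk_X, concaGen_self]
  exact not_isUnit_eps

instance [IsLocalRing k] : IsLocalRing (ConcaRing k i₀) := by
  classical
  have := (concaEquiv k i₀).toEquiv.nontrivial
  exact .of_surjective' ((concaEquiv k i₀).symm : ConcaModel k i₀ →+* ConcaRing k i₀)
    fun x => ⟨concaEquiv k i₀ x, (concaEquiv k i₀).symm_apply_apply x⟩

end CommRing

section Field

variable {k : Type*} [Field k] {σ : Type*} {i₀ : σ}

lemma concaRing_residue_surjective :
    Function.Surjective (algebraMap k (ResidueField (ConcaRing k i₀))) := by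
  classical
  intro y
  obtain ⟨x, rfl⟩ := residue_surjective y
  refine ⟨(concaEquiv k i₀ x).fst.fst, ?_⟩
  change residue _ (algebraMap k _ _) = _
  rw [eq_comm, ← sub_eq_zero, ← map_sub, residue_eq_zero_iff, mem_maximalIdeal, mem_nonunits_iff,
    ← isUnit_map_iff (concaEquiv k i₀)]
  simp [isUnit_iff_isUnit_fst, algebraMap_eq_inl']

variable [Fintype σ]

instance : Module.Finite k (ConcaModel k i₀) :=
  inferInstanceAs (Module.Finite k ((k × ({j // j ≠ i₀} →₀ k)) × (k × ({j // j ≠ i₀} →₀ k))))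

instance : Module.Finite k (ConcaRing k i₀) := by
  classical
  exact .equiv (concaEquiv k i₀).symm.toLinearEquiv

lemma finrank_concaModel : Module.finrank k (ConcaModel k i₀) = 2 * Fintype.card σ := by
  classical
  change Module.finrank k ((k × ({j // j ≠ i₀} →₀ k)) × (k × ({j // j ≠ i₀} →₀ k))) = _
  have : 0 < Fintype.card σ := Fintype.card_pos_iff.mpr ⟨i₀⟩
  simp only [Module.finrank_prod, Module.finrank_self, Module.finrank_finsupp_self,
    Fintype.card_subtype_compl, Fintype.card_unique]
  omega

lemma length_concaRing :
    Module.length (ConcaRing k i₀) (ConcaRing k i₀) = (2 * Fintype.card σ : ℕ) := by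
  classical
  rw [Module.length_eq_finrank_of_residue_surjective concaRing_residue_surjective,
    (concaEquiv k i₀).toLinearEquiv.finrank_eq, finrank_concaModel]

lemma length_concaVarIdeal_sq :
    Module.length (ConcaRing k i₀) ↥(concaVarIdeal k i₀ ^ 2) = (Fintype.card σ - 1 : ℕ) := by
  classical
  have := Module.Finite.equiv (concaVarIdealSqEquiv k i₀).symm
  rw [Module.length_eq_finrank_of_residue_surjective concaRing_residue_surjective,
    (concaVarIdealSqEquiv k i₀).finrank_eq]
  simp [Fintype.card_subtype_compl]

end Field

end MvPolynomial

/-- in `R = k[x₁,…,x_e]/((x₁²) + (xᵢxⱼ : 2 ≤ i ≤ j ≤ e))` the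
annihilator of `x₁` is the ideal `(x₁)`; in particular `x₁` is an exact zero
divisor.  Moreover `R` has Hilbert series `1 + eτ + (e-1)τ²` (encoded by:
`m³ = 0`, `length m² = e - 1`, `length R = 2e`, where `m = (x₁,…,x_e)`). -/
theorem stmt13 (k : Type u) [Field k] (e : ℕ) (he : 2 ≤ e) :
    annIdeal (MvPolynomial (Fin e) k ⧸ I13 k e he)
        (Ideal.Quotient.mk _ (X ⟨0, by omega⟩)) =
      Ideal.span {Ideal.Quotient.mk _ (X ⟨0, by omega⟩)} ∧
    ((Ideal.Quotient.mk (I13 k e he) (X ⟨0, by omega⟩)) ≠ 0 ∧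
      ¬ IsUnit (Ideal.Quotient.mk (I13 k e he) (X ⟨0, by omega⟩))) ∧
    (Ideal.span (Set.range fun i : Fin e =>
        (Ideal.Quotient.mk (I13 k e he) (X i)))) ^ 3 = ⊥ ∧
    moduleLength (MvPolynomial (Fin e) k ⧸ I13 k e he)
        (↥((Ideal.span (Set.range fun i : Fin e =>
          (Ideal.Quotient.mk (I13 k e he) (X i)))) ^ 2)) =
      ((e - 1 : ℕ) : WithBot ℕ∞) ∧
    moduleLength (MvPolynomial (Fin e) k ⧸ I13 k e he)
        (MvPolynomial (Fin e) k ⧸ I13 k e he) =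
      ((2 * e : ℕ) : WithBot ℕ∞) := by
  let i₀ : Fin e := ⟨0, by omega⟩
  have h_sq := length_concaVarIdeal_sq (k := k) (i₀ := i₀)
  have h_R := length_concaRing (k := k) (i₀ := i₀)
  rw [Fintype.card_fin] at h_sq h_R
  refine ⟨annIdeal_mk_X_self, ⟨mk_X_self_ne_zero, not_isUnit_mk_X_self⟩, concaVarIdeal_pow_three,
    ?_, ?_⟩
  · rw [moduleLength, ← Module.coe_length]
    exact congrArg _ h_sq
  · rw [moduleLength, ← Module.coe_length]
    exact congrArg _ h_R
end
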